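/- Let G = (V,E) be a finite, simple, undirected, connected graph, and let Q, T ⊆ V be connected vertex sets with |Q| = |T| = n, Q ∩ T ≠ ∅, and Q ≠ T. Then there exists a connected vertex set Q' ⊆ V with |Q'| = n that is reachable from Q in one step and such that the number of vertices of a largest connected component of the induced subgraph G[Q' ∩ T] is at least one more than the number of vertices of a largest connected component of G[Q ∩ T]. -/

import Mathlib

/-!
Let `C` be a largest connected vertex set inside `Q ∩ T`. As `T` is connected and `T ⊄ Q`,
some `w ∈ T \ C` is adjacent to a vertex `c ∈ C`, and `w ∉ Q`, for otherwise `C ∪ {w}` would be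
a larger connected set inside `Q ∩ T`. As `Q` is connected and `C ⊊ Q`, growing `C` inside `Q` one
neighbour at a time ends at a vertex `u ∈ Q \ C` whose removal keeps `Q` connected. Along a path
`u, …, c` in `G[Q]` every agent advances one vertex, the one at `c` moving to `w`: this is one
swap-free step to `Q' = Q - u + w`, and `C ∪ {w} ⊆ Q' ∩ T` is connected.
-/

open SimpleGraph

variable {V : Type*}

/-- A vertex set `Q` is connected if the subgraph of `G` induced by `Q` is connected. -/
def ConnSet (G : SimpleGraph V) (Q : Finset V) : Prop :=
  (G.induce (Q : Set V)).Connected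

/-- `Q'` is reachable from `Q` in one step. -/
def OneStep (G : SimpleGraph V) (Q Q' : Finset V) : Prop :=
  ∃ φ : {x // x ∈ Q} ≃ {x // x ∈ Q'},
    (∀ v : {x // x ∈ Q}, ((φ v : V) = (v : V)) ∨ G.Adj (v : V) ((φ v : V))) ∧
    ∀ u v : {x // x ∈ Q}, (u : V) ≠ (v : V) →
      ¬(((φ u : V) = (v : V)) ∧ ((φ v : V) = (u : V)))

/-- The number of vertices of a largest connected component of the induced
subgraph `G[W]`. -/
noncomputable def maxCompCard (G : SimpleGraph V) (W : Finset V) : ℕ :=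
  sSup (Set.range
    fun C : (G.induce (W : Set V)).ConnectedComponent => Nat.card C.supp)

namespace ConnSet

variable {G : SimpleGraph V} {S : Finset V}

theorem nonempty (hS : ConnSet G S) : S.Nonempty :=
  let ⟨⟨v, hv⟩⟩ := Connected.nonempty hS
  ⟨v, hv⟩

theorem insert_of_adj [DecidableEq V] (hS : ConnSet G S) {c w : V} (hc : c ∈ S)
    (hcw : G.Adj c w) : ConnSet G (insert w S) := by
  have h := induce_union_connected hS.preconnected
    (induce_pair_connected_of_adj hcw).preconnected ⟨c, hc, Set.mem_insert c {w}⟩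
  rwa [Set.union_insert, Set.union_singleton,
    Set.insert_eq_of_mem (Set.mem_insert_of_mem w hc), ← Finset.coe_insert] at h

theorem exists_adj_of_ssubset {C : Finset V} (hS : ConnSet G S) (hC : C.Nonempty)
    (hCS : C ⊂ S) : ∃ c ∈ C, ∃ x ∈ S, x ∉ C ∧ G.Adj c x := by
  obtain ⟨a, ha⟩ := hC
  obtain ⟨b, hbS, hbC⟩ := Finset.exists_of_ssubset hCS
  obtain ⟨p⟩ := hS.preconnected ⟨a, hCS.subset ha⟩ ⟨b, hbS⟩
  obtain ⟨d, -, hd, hd'⟩ := p.exists_boundary_dart {x | x.1 ∈ C} ha hbC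
  exact ⟨d.fst, hd, d.snd, d.snd.2, hd', d.adj⟩

theorem exists_erase_of_ssubset [DecidableEq V] {C : Finset V} (hS : ConnSet G S)
    (hC : ConnSet G C) (hCS : C ⊂ S) : ∃ u ∈ S, u ∉ C ∧ ConnSet G (S.erase u) := by
  obtain ⟨c, hc, x, hxS, hxC, hcx⟩ := hS.exists_adj_of_ssubset hC.nonempty hCS
  by_cases hx : insert x C = S
  · exact ⟨x, hxS, hxC, by rwa [← hx, Finset.erase_insert hxC]⟩
  · have hxCS : insert x C ⊂ S :=
      Finset.ssubset_iff_subset_ne.mpr ⟨Finset.insert_subset hxS hCS.subset, hx⟩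
    obtain ⟨u, huS, huC, hSu⟩ := hS.exists_erase_of_ssubset (hC.insert_of_adj hc hcx) hxCS
    exact ⟨u, huS, fun h => huC (Finset.mem_insert_of_mem h), hSu⟩
termination_by S.card - C.card
decreasing_by
  have := Finset.card_lt_card hxCS
  rw [Finset.card_insert_of_notMem hxC] at this ⊢
  omega

end ConnSet

section maxCompCard

variable {G : SimpleGraph V}

theorem bddAbove_range_card_supp (W : Finset V) :
    BddAbove (Set.range
      fun K : (G.induce (W : Set V)).ConnectedComponent => Nat.card K.supp) := by
  refine ⟨W.card, ?_⟩
  rintro _ ⟨K, rfl⟩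
  calc Nat.card K.supp ≤ Nat.card (W : Set V) := Finite.card_subtype_le _
    _ = W.card := by simp

theorem card_le_maxCompCard {S W : Finset V} (hS : ConnSet G S) (hSW : S ⊆ W) :
    S.card ≤ maxCompCard G W := by
  obtain ⟨s, hs⟩ := hS.nonempty
  let K := (G.induce (W : Set V)).connectedComponentMk ⟨s, hSW hs⟩
  let f : ↥(S : Set V) → K.supp := fun x =>
    ⟨⟨x, hSW x.2⟩, ConnectedComponent.sound <|
      (hS.preconnected x ⟨s, hs⟩).map (induceHomOfLE (G := G) hSW).toHom⟩
  calc S.card = Nat.card (S : Set V) := by simp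
    _ ≤ Nat.card K.supp :=
      Nat.card_le_card_of_injective f fun x y h => Subtype.ext (congrArg (·.1.1) h)
    _ ≤ maxCompCard G W := le_csSup (bddAbove_range_card_supp W) ⟨K, rfl⟩

theorem exists_connSet_card_eq_maxCompCard {W : Finset V} (hW : W.Nonempty) :
    ∃ C ⊆ W, ConnSet G C ∧ C.card = maxCompCard G W := by
  obtain ⟨w, hw⟩ := hW
  obtain ⟨K, hK⟩ := Nat.sSup_mem (Set.range_nonempty_iff_nonempty.mpr
    ⟨(G.induce (W : Set V)).connectedComponentMk ⟨w, hw⟩⟩) (bddAbove_range_card_supp W)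
  have hfin : (Subtype.val '' K.supp).Finite := (Set.toFinite K.supp).image _
  refine ⟨hfin.toFinset, ?_, ?_, ?_⟩
  · intro v hv
    obtain ⟨x, -, rfl⟩ := hfin.mem_toFinset.mp hv
    exact x.2
  · let f : K.toSimpleGraph →g G.induce (hfin.toFinset : Set V) :=
      ⟨fun x => ⟨x.1.1, hfin.mem_toFinset.mpr ⟨x.1, x.2, rfl⟩⟩, fun h => h⟩
    refine K.connected_toSimpleGraph.map f ?_
    rintro ⟨_, hv⟩
    obtain ⟨x, hx, rfl⟩ := hfin.mem_toFinset.mp hv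
    exact ⟨⟨x, hx⟩, rfl⟩
  · rw [← Set.ncard_eq_toFinset_card _ hfin, Set.ncard_image_of_injective _ Subtype.val_injective,
      ← Nat.card_coe_set_eq]
    exact hK

end maxCompCard

namespace SimpleGraph.Walk

variable {G : SimpleGraph V} {u w x : V} {p : G.Walk u w}

theorem exists_getElem_support_eq_of_ne_end (hx : x ∈ p.support) (hxw : x ≠ w) :
    ∃ i, ∃ hi : i + 1 < p.support.length, p.support[i] = x := by
  obtain ⟨i, hi, rfl⟩ := List.getElem_of_mem hx
  refine ⟨i, ?_, rfl⟩
  by_contra! h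
  obtain rfl : i = p.support.length - 1 := by omega
  exact hxw ((List.getLast_eq_getElem _).symm.trans p.getLast_support)

variable [DecidableEq V]

theorem formPerm_support_end (p : G.Walk u w) : p.support.formPerm w = u := by
  have := List.formPerm_apply_getLast u p.support.tail
  simpa only [cons_tail_support, getLast_support] using this

theorem IsPath.adj_formPerm_support (hp : p.IsPath) (hx : x ∈ p.support) (hxw : x ≠ w) :
    G.Adj x (p.support.formPerm x) := by
  obtain ⟨i, hi, rfl⟩ := exists_getElem_support_eq_of_ne_end hx hxw
  rw [List.formPerm_apply_lt_getElem _ hp.support_nodup i hi]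
  exact p.isChain_adj_support.getElem i hi

theorem IsPath.formPerm_support_formPerm_ne (hp : p.IsPath) (hx : x ∈ p.support) (hxw : x ≠ w)
    (hσx : p.support.formPerm x ≠ w) : p.support.formPerm (p.support.formPerm x) ≠ x := by
  obtain ⟨i, hi, rfl⟩ := exists_getElem_support_eq_of_ne_end hx hxw
  rw [List.formPerm_apply_lt_getElem _ hp.support_nodup i hi] at hσx ⊢
  obtain ⟨j, hj, hji⟩ := exists_getElem_support_eq_of_ne_end (List.getElem_mem _) hσx
  rw [← hji, List.formPerm_apply_lt_getElem _ hp.support_nodup j hj, Ne,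
    hp.support_nodup.getElem_inj_iff]
  rw [hp.support_nodup.getElem_inj_iff] at hji
  omega

end SimpleGraph.Walk

section oneStep

variable {G : SimpleGraph V} {Q Q' : Finset V}

theorem oneStep_of_perm (σ : Equiv.Perm V) (hσ : ∀ x, x ∈ Q ↔ σ x ∈ Q')
    (hmove : ∀ x ∈ Q, σ x = x ∨ G.Adj x (σ x))
    (hswap : ∀ x ∈ Q, σ x ∈ Q → σ (σ x) = x → σ x = x) : OneStep G Q Q' :=
  ⟨σ.subtypeEquiv hσ, fun x => hmove x x.2, fun x y hxy h => by
    obtain ⟨h1, h2⟩ : σ x = y ∧ σ y = x := h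
    exact hxy ((hswap x x.2 (h1 ▸ y.2) (h1 ▸ h2)).symm.trans h1)⟩

theorem SimpleGraph.Walk.IsPath.oneStep_insert_erase [DecidableEq V] {u c w : V}
    {p : G.Walk u c} (hp : p.IsPath) (hpQ : ∀ x ∈ p.support, x ∈ Q) (hwQ : w ∉ Q)
    (hcw : G.Adj c w) : OneStep G Q (insert w (Q.erase u)) := by
  have hwp : w ∉ p.support := fun h => hwQ (hpQ w h)
  have hp' := hp.concat hwp hcw
  -- the cyclic shift of `u, …, c, w`; its wrap-around `w ↦ u` moves no agent, as `w ∉ Q`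
  set σ := (p.concat hcw).support.formPerm
  have hmem : ∀ x, x ∈ (p.concat hcw).support ↔ x ∈ p.support ∨ x = w := by
    simp [Walk.support_concat]
  have hfix : ∀ x ∉ (p.concat hcw).support, σ x = x := fun _ => List.formPerm_apply_of_notMem
  have hσw : σ w = u := (p.concat hcw).formPerm_support_end
  refine oneStep_of_perm σ (fun x => ?_) (fun x hxQ => ?_) (fun x hxQ hσxQ hσσ => ?_)
  · by_cases hx : x ∈ (p.concat hcw).support
    · by_cases hxw : x = w
      · subst hxw
        simp [hσw, hwQ, ne_of_mem_of_not_mem p.start_mem_support hwp]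
      · have hσxu : σ x ≠ u := fun h => hxw (σ.injective (h.trans hσw.symm))
        refine iff_of_true (hpQ x (((hmem x).1 hx).resolve_right hxw)) ?_
        rcases (hmem _).1 (List.formPerm_apply_mem_of_mem hx) with h | h
        · exact Finset.mem_insert_of_mem (Finset.mem_erase.2 ⟨hσxu, hpQ _ h⟩)
        · exact h ▸ Finset.mem_insert_self _ _
    · have hxu : x ≠ u := fun h => hx ((hmem x).2 (.inl (h ▸ p.start_mem_support)))
      have hxw : x ≠ w := fun h => hx ((hmem x).2 (.inr h))
      simp [hfix x hx, hxu, hxw]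
  · by_cases hx : x ∈ (p.concat hcw).support
    · exact .inr (hp'.adj_formPerm_support hx (ne_of_mem_of_not_mem hxQ hwQ))
    · exact .inl (hfix x hx)
  · by_contra hne
    have hx : x ∈ (p.concat hcw).support := by_contra fun hx => hne (hfix x hx)
    exact hp'.formPerm_support_formPerm_ne hx (ne_of_mem_of_not_mem hxQ hwQ)
      (ne_of_mem_of_not_mem hσxQ hwQ) hσσ

theorem ConnSet.oneStep_insert_erase [DecidableEq V] (hQ : ConnSet G Q) {u c w : V} (hu : u ∈ Q)
    (hc : c ∈ Q) (hwQ : w ∉ Q) (hcw : G.Adj c w) : OneStep G Q (insert w (Q.erase u)) := by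
  obtain ⟨q⟩ := hQ.preconnected ⟨u, hu⟩ ⟨c, hc⟩
  refine (q.map (Embedding.induce (Q : Set V)).toHom).bypass_isPath.oneStep_insert_erase
    (fun x hx => ?_) hwQ hcw
  have hx' := Walk.support_bypass_subset_support _ hx
  rw [Walk.support_map] at hx'
  obtain ⟨y, -, rfl⟩ := List.mem_map.1 hx'
  exact y.2

end oneStep

theorem stmt9_general [DecidableEq V] (G : SimpleGraph V)
    (n : ℕ) (Q T : Finset V)
    (hQconn : ConnSet G Q) (hTconn : ConnSet G T)
    (hQcard : Q.card = n) (hTcard : T.card = n)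
    (hint : (Q ∩ T).Nonempty) (hne : Q ≠ T) :
    ∃ Q' : Finset V, Q'.card = n ∧ ConnSet G Q' ∧ OneStep G Q Q' ∧
      maxCompCard G (Q ∩ T) + 1 ≤ maxCompCard G (Q' ∩ T) := by
  obtain ⟨C, hCQT, hC, hCcard⟩ := exists_connSet_card_eq_maxCompCard (G := G) hint
  obtain ⟨hCQ, hCT⟩ := Finset.subset_inter_iff.1 hCQT
  have hQT : ¬Q ⊆ T := fun h => hne (Finset.eq_of_subset_of_card_le h (by omega))
  have hTQ : ¬T ⊆ Q := fun h => hne (Finset.eq_of_subset_of_card_le h (by omega)).symm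
  obtain ⟨c, hcC, w, hwT, hwC, hcw⟩ :=
    hTconn.exists_adj_of_ssubset hC.nonempty (hCT.ssubset_of_not_subset (hTQ <| ·.trans hCQ))
  have hCw : ConnSet G (insert w C) := hC.insert_of_adj hcC hcw
  have hCw_card : (insert w C).card = C.card + 1 := Finset.card_insert_of_notMem hwC
  have hwQ : w ∉ Q := fun hwQ => by
    have := card_le_maxCompCard hCw (Finset.insert_subset (Finset.mem_inter.2 ⟨hwQ, hwT⟩) hCQT)
    omega
  obtain ⟨u, huQ, huC, hQu⟩ :=
    hQconn.exists_erase_of_ssubset hC (hCQ.ssubset_of_not_subset (hQT <| ·.trans hCT))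
  have hCQu : C ⊆ Q.erase u := fun x hx =>
    Finset.mem_erase.2 ⟨ne_of_mem_of_not_mem hx huC, hCQ hx⟩
  refine ⟨insert w (Q.erase u), ?_, hQu.insert_of_adj (hCQu hcC) hcw,
    hQconn.oneStep_insert_erase huQ (hCQ hcC) hwQ hcw, ?_⟩
  · rw [Finset.card_insert_of_notMem (hwQ <| Finset.mem_of_mem_erase ·),
      Finset.card_erase_add_one huQ, hQcard]
  · have := card_le_maxCompCard hCw <|
      Finset.subset_inter (Finset.insert_subset_insert w hCQu) (Finset.insert_subset hwT hCT)
    omega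

/-- If `Q` and `T` are connected vertex sets of size `n` with `Q ∩ T ≠ ∅` and
`Q ≠ T`, then there is a connected vertex set `Q'` of size `n`, reachable from
`Q` in one step, such that the largest connected component of `G[Q' ∩ T]` has at
least one more vertex than that of `G[Q ∩ T]`. -/
theorem stmt9 [Fintype V] [DecidableEq V] (G : SimpleGraph V) (hG : G.Connected)
    (n : ℕ) (Q T : Finset V)
    (hQconn : ConnSet G Q) (hTconn : ConnSet G T)
    (hQcard : Q.card = n) (hTcard : T.card = n)
    (hint : (Q ∩ T).Nonempty) (hne : Q ≠ T) :
    ∃ Q' : Finset V, Q'.card = n ∧ ConnSet G Q' ∧ OneStep G Q Q' ∧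
      maxCompCard G (Q ∩ T) + 1 ≤ maxCompCard G (Q' ∩ T) :=
  stmt9_general G n Q T hQconn hTconn hQcard hTcard hint hne
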